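/- If a prediction is robust whenever the amount of perturbation inside its receptive field is within a certified set, then restricting attention to receptive-field perturbations is sound: for any perturbed input x', if the vector of perturbation counts of x' restricted to the receptive field lies in the certified set K, then f_n(x) = f_n(x'). -/
import Mathlib


open Classical in
/-- Restricting attention to receptive-field perturbations is sound: if the
vector of perturbation counts of `x'` inside the receptive field `S` lies in the
certified set `K` (where membership of the full perturbation-count vector in `K`
certifies robustness), then the prediction on `x'` is unchanged. -/
theorem receptive_field_count_soundness
    {I C : Type*} [Fintype I] [DecidableEq I]
    (t : I → Fin 4)
    (f : (I → Bool) → C)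
    (x x' : I → Bool)
    (S : Finset I)
    (hS : ∀ y z : I → Bool, (∀ i ∈ S, y i = z i) → f y = f z)
    (K : Set (Fin 4 → ℕ))
    (hK : ∀ x'' : I → Bool,
      (fun d => (Finset.univ.filter (fun i => t i = d ∧ x'' i ≠ x i)).card) ∈ K →
      f x = f x'')
    (hmem : (fun d => (S.filter (fun i => t i = d ∧ x' i ≠ x i)).card) ∈ K) :
    f x = f x' := by
  set x'' : I → Bool := fun i => if i ∈ S then x' i else x i with hx''
  have h1 : f x = f x'' := by
    apply hK
    have : (fun d => (Finset.univ.filter (fun i => t i = d ∧ x'' i ≠ x i)).card)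
        = (fun d => (S.filter (fun i => t i = d ∧ x' i ≠ x i)).card) := by
      funext d
      congr 1
      ext i
      simp only [Finset.mem_filter, Finset.mem_univ, true_and, hx'']
      by_cases h : i ∈ S <;> simp [h]
    rw [this]
    exact hmem
  have h2 : f x'' = f x' := hS _ _ (fun i hi => by simp [hx'', hi])
  exact h1.trans h2
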